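/- Let G be a finite simple graph containing an alternating 4-cycle ⟨p,q:r,s⟩ together with a fifth vertex u with edges up, uq and non-edges ur, us (the configuration whose realizations are the house, K2+K3, and the co-4-pan). If the graph H obtained from G by the 2-switch on ⟨p,q:r,s⟩ is isomorphic to G, then G contains some vertex v ∉ {p,q,r,s} whose neighborhood intersects {p,q,r,s} in exactly {q,r} or exactly {p,s}. -/

import Mathlib

open SimpleGraph

/-- An alternating 4-cycle ⟨a,b:c,d⟩: four distinct vertices with ab, cd edges
and bc, ad non-edges. -/
def A4 {V : Type*} (G : SimpleGraph V) (a b c d : V) : Prop :=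
  a ≠ b ∧ a ≠ c ∧ a ≠ d ∧ b ≠ c ∧ b ≠ d ∧ c ≠ d ∧
  G.Adj a b ∧ G.Adj c d ∧ ¬ G.Adj b c ∧ ¬ G.Adj a d

/-- The 2-switch on ⟨a,b:c,d⟩: delete edges ab, cd and add edges bc, ad. -/
def twoSwitch {V : Type*} (G : SimpleGraph V) (a b c d : V) : SimpleGraph V :=
  SimpleGraph.fromEdgeSet ((G.edgeSet \ {s(a,b), s(c,d)}) ∪ {s(b,c), s(a,d)})

/-!
The 2-switch on `⟨p,q:r,s⟩` destroys exactly the triangles through `pq` or `rs` and creates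
exactly those through `qr` or `ps`, and the triangles through an edge correspond to the common
neighbours of its ends. Since `G ≅ H` have equally many triangles,
`|A| + |B| = |C| + |D|` for `A = N(p) ∩ N(q)`, `B = N(r) ∩ N(s)`, `C = N(q) ∩ N(r) \ {p, s}` and
`D = N(s) ∩ N(p) \ {q, r}` (neighbourhoods in `G`). Always `C ∩ D ⊆ A ∩ B`. If no vertex saw
exactly `{q, r}` or `{p, s}`, then `C ∪ D ⊆ A ∪ B`, and `u ∈ A \ (C ∪ D)` would make the left-hand
side strictly larger.
-/

open Finset

theorem Finset.card_add_card_lt_card_add_card {α : Type*} [DecidableEq α] {A B C D : Finset α}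
    (hunion : C ∪ D ⊂ A ∪ B) (hinter : C ∩ D ⊆ A ∩ B) : #C + #D < #A + #B := by
  have := card_union_add_card_inter A B
  have := card_union_add_card_inter C D
  have := card_lt_card hunion
  have := card_le_card hinter
  omega

section

variable {V : Type*} {G : SimpleGraph V} {a b c d x y : V}

namespace SimpleGraph

theorem Iso.card_cliqueFinset_eq [Fintype V] [DecidableEq V] {H : SimpleGraph V}
    [DecidableRel G.Adj] [DecidableRel H.Adj] (φ : G ≃g H) (n : ℕ) :
    #(G.cliqueFinset n) = #(H.cliqueFinset n) := by
  have hH : G.map φ.toEquiv.toEmbedding = H := by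
    ext u v
    simp only [map_adj]
    constructor
    · rintro ⟨a, b, hab, rfl, rfl⟩
      exact φ.map_adj_iff.2 hab
    · intro huv
      exact ⟨φ.symm u, φ.symm v, φ.symm.map_adj_iff.2 huv, by simp, by simp⟩
  rw [← card_map ⟨Finset.map φ.toEquiv.toEmbedding, Finset.map_injective _⟩,
    ← cliqueFinset_map_of_equiv]
  congr!

theorem Adj.card_filter_cliqueFinset_three [Fintype V] [DecidableEq V] [DecidableRel G.Adj]
    (hab : G.Adj a b) :
    #{t ∈ G.cliqueFinset 3 | a ∈ t ∧ b ∈ t} = #(G.neighborFinset a ∩ G.neighborFinset b) := by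
  symm
  refine card_bij (fun x _ => {a, b, x}) ?_ ?_ ?_
  · intro x hx
    simp only [mem_inter, mem_neighborFinset] at hx
    simp [mem_cliqueFinset_iff, is3Clique_triple_iff, hab, hx.1, hx.2]
  · intro x hx y hy hxy
    simp only [mem_inter, mem_neighborFinset] at hx hy
    have hy' : y ∈ ({a, b, x} : Finset V) := hxy ▸ by simp
    simp only [mem_insert, mem_singleton] at hy'
    rcases hy' with rfl | rfl | rfl
    · exact absurd hy.1 G.irrefl
    · exact absurd hy.2 G.irrefl
    · rfl
  · intro t ht
    simp only [mem_filter, mem_cliqueFinset_iff] at ht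
    obtain ⟨⟨hclique, hcard⟩, ha, hb⟩ := ht
    have hb' : b ∈ t.erase a := mem_erase.2 ⟨hab.ne', hb⟩
    obtain ⟨x, hx⟩ : ∃ x, (t.erase a).erase b = {x} := card_eq_one.1 (by
      rw [card_erase_of_mem hb', card_erase_of_mem ha, hcard])
    have hxt : x ∈ (t.erase a).erase b := by simp [hx]
    simp only [mem_erase] at hxt
    refine ⟨x, ?_, ?_⟩
    · simp only [mem_inter, mem_neighborFinset]
      exact ⟨hclique ha hxt.2.2 (Ne.symm hxt.2.1), hclique hb hxt.2.2 (Ne.symm hxt.1)⟩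
    · rw [← hx, insert_erase hb', insert_erase ha]

end SimpleGraph

theorem twoSwitch_adj :
    (twoSwitch G a b c d).Adj x y ↔ x ≠ y ∧
      ((G.Adj x y ∧ ¬(x = a ∧ y = b ∨ x = b ∧ y = a) ∧ ¬(x = c ∧ y = d ∨ x = d ∧ y = c)) ∨
        (x = b ∧ y = c ∨ x = c ∧ y = b) ∨ (x = a ∧ y = d ∨ x = d ∧ y = a)) := by
  rw [twoSwitch, fromEdgeSet_adj]
  simp only [Set.mem_union, Set.mem_sdiff, Set.mem_insert_iff, Set.mem_singleton_iff, mem_edgeSet,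
    Sym2.eq_iff]
  tauto

theorem twoSwitch_comm : twoSwitch G c d a b = twoSwitch G a b c d := by
  ext x y
  simp only [twoSwitch_adj]
  grind

namespace A4

theorem symm (h : A4 G a b c d) : A4 G c d a b := by
  obtain ⟨hab, hac, had, hbc, hbd, hcd, hGab, hGcd, hGbc, hGad⟩ := h
  exact ⟨hcd, hac.symm, hbc.symm, had.symm, hbd.symm, hab, hGcd, hGab,
    fun h' => hGad h'.symm, fun h' => hGbc h'.symm⟩

theorem reverse (h : A4 G a b c d) : A4 (twoSwitch G a b c d) b c d a := by
  obtain ⟨hab, hac, had, hbc, hbd, hcd, hGab, hGcd, hGbc, hGad⟩ := h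
  refine ⟨hbc, hbd, hab.symm, hcd, hac.symm, had.symm, ?_, ?_, ?_, ?_⟩ <;>
    simp only [twoSwitch_adj] <;> grind

theorem twoSwitch_twoSwitch (h : A4 G a b c d) :
    twoSwitch (twoSwitch G a b c d) b c d a = G := by
  obtain ⟨hab, hac, had, hbc, hbd, hcd, hGab, hGcd, hGbc, hGad⟩ := h
  ext x y
  simp only [twoSwitch_adj]
  grind [adj_comm, Adj.ne]

theorem twoSwitch_adj_iff_of_adj (h : A4 G a b c d) (hxy : G.Adj x y) :
    (twoSwitch G a b c d).Adj x y ↔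
      ¬(x = a ∧ y = b ∨ x = b ∧ y = a) ∧ ¬(x = c ∧ y = d ∨ x = d ∧ y = c) := by
  obtain ⟨-, -, -, -, -, -, -, -, hGbc, hGad⟩ := h
  simp only [twoSwitch_adj]
  grind [adj_comm, Adj.ne]

theorem adj_and_adj_twoSwitch_iff (h : A4 G a b c d) :
    (twoSwitch G a b c d).Adj b x ∧ (twoSwitch G a b c d).Adj c x ↔
      x ≠ a ∧ x ≠ d ∧ G.Adj b x ∧ G.Adj c x := by
  obtain ⟨hab, hac, had, hbc, hbd, hcd, hGab, hGcd, hGbc, hGad⟩ := h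
  simp only [twoSwitch_adj]
  grind [adj_comm, Adj.ne]

theorem isNClique_twoSwitch_iff (h : A4 G a b c d) {n : ℕ} {t : Finset V}
    (ht : G.IsNClique n t) :
    (twoSwitch G a b c d).IsNClique n t ↔ ¬((a ∈ t ∧ b ∈ t) ∨ (c ∈ t ∧ d ∈ t)) := by
  obtain ⟨-, -, hba, hcd, -, -, -, -, hHcd, hHba⟩ := h.reverse
  constructor
  · rintro hH (⟨ha, hb⟩ | ⟨hc, hd⟩)
    · exact hHba (hH.1 hb ha hba)
    · exact hHcd (hH.1 hc hd hcd)
  · intro hno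
    refine ⟨fun x hx y hy hxy => ?_, ht.card_eq⟩
    rw [h.twoSwitch_adj_iff_of_adj (ht.1 hx hy hxy)]
    grind

theorem card_cliqueFinset_three_sdiff_twoSwitch [Fintype V] [DecidableEq V] [DecidableRel G.Adj]
    [DecidableRel (twoSwitch G a b c d).Adj] (h : A4 G a b c d) :
    #(G.cliqueFinset 3 \ (twoSwitch G a b c d).cliqueFinset 3) =
      #(G.neighborFinset a ∩ G.neighborFinset b) + #(G.neighborFinset c ∩ G.neighborFinset d) := by
  have hsdiff : G.cliqueFinset 3 \ (twoSwitch G a b c d).cliqueFinset 3 =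
      {t ∈ G.cliqueFinset 3 | a ∈ t ∧ b ∈ t} ∪ {t ∈ G.cliqueFinset 3 | c ∈ t ∧ d ∈ t} := by
    ext t
    simp only [mem_sdiff, mem_union, mem_filter, mem_cliqueFinset_iff]
    by_cases ht : G.IsNClique 3 t
    · simp only [h.isNClique_twoSwitch_iff ht, ht, true_and, not_not]
    · simp only [ht, false_and, or_self]
  obtain ⟨hab, hac, had, hbc, hbd, hcd, hGab, hGcd, -, -⟩ := h
  have hdisj : Disjoint {t ∈ G.cliqueFinset 3 | a ∈ t ∧ b ∈ t}
      {t ∈ G.cliqueFinset 3 | c ∈ t ∧ d ∈ t} := by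
    rw [disjoint_filter]
    rintro t ht ⟨ha, hb⟩ ⟨hc, hd⟩
    have hle : #({a, b, c, d} : Finset V) ≤ #t :=
      card_le_card (by simp [insert_subset_iff, ha, hb, hc, hd])
    rw [(mem_cliqueFinset_iff.1 ht).card_eq] at hle
    simp [hab, hac, had, hbc, hbd, hcd] at hle
  rw [hsdiff, card_union_of_disjoint hdisj, hGab.card_filter_cliqueFinset_three,
    hGcd.card_filter_cliqueFinset_three]

theorem card_commonNeighbors_add_eq_of_iso [Fintype V] [DecidableEq V] [DecidableRel G.Adj]
    (h : A4 G a b c d) (φ : G ≃g twoSwitch G a b c d) :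
    #(G.neighborFinset a ∩ G.neighborFinset b) + #(G.neighborFinset c ∩ G.neighborFinset d) =
      #((G.neighborFinset b ∩ G.neighborFinset c) \ {a, d}) +
        #((G.neighborFinset d ∩ G.neighborFinset a) \ {b, c}) := by
  classical
  have hbc : (twoSwitch G a b c d).neighborFinset b ∩ (twoSwitch G a b c d).neighborFinset c =
      (G.neighborFinset b ∩ G.neighborFinset c) \ {a, d} := by
    ext x
    simp only [mem_sdiff, mem_inter, mem_neighborFinset, mem_insert, mem_singleton,
      h.adj_and_adj_twoSwitch_iff]
    tauto
  have hda : (twoSwitch G a b c d).neighborFinset d ∩ (twoSwitch G a b c d).neighborFinset a =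
      (G.neighborFinset d ∩ G.neighborFinset a) \ {b, c} := by
    ext x
    have hx := h.symm.adj_and_adj_twoSwitch_iff (x := x)
    rw [twoSwitch_comm] at hx
    simp only [mem_sdiff, mem_inter, mem_neighborFinset, mem_insert, mem_singleton, hx]
    tauto
  rw [← hbc, ← hda, ← h.card_cliqueFinset_three_sdiff_twoSwitch,
    ← h.reverse.card_cliqueFinset_three_sdiff_twoSwitch, h.twoSwitch_twoSwitch]
  convert card_sdiff_comm (φ.card_cliqueFinset_eq 3)

end A4

end

theorem stmt_18_general {V : Type*} [Fintype V] (G : SimpleGraph V) (p q r s u : V)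
    (h : A4 G p q r s)
    (hup : G.Adj u p) (huq : G.Adj u q) (hur : ¬ G.Adj u r) (hus : ¬ G.Adj u s)
    (hiso : Nonempty (G ≃g twoSwitch G p q r s)) :
    ∃ v : V, v ∉ ({p, q, r, s} : Set V) ∧
      ((G.Adj v q ∧ G.Adj v r ∧ ¬ G.Adj v p ∧ ¬ G.Adj v s) ∨
       (G.Adj v p ∧ G.Adj v s ∧ ¬ G.Adj v q ∧ ¬ G.Adj v r)) := by
  classical
  obtain ⟨φ⟩ := hiso
  by_contra! hcon
  refine (card_add_card_lt_card_add_card ?_ ?_).ne' (h.card_commonNeighbors_add_eq_of_iso φ)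
  · refine (ssubset_iff_of_subset ?_).2 ⟨u, by simp [hup.symm, huq.symm], ?_⟩
    · intro x
      have hx := hcon x
      simp only [Set.mem_insert_iff, Set.mem_singleton_iff] at hx
      simp only [mem_union, mem_sdiff, mem_inter, mem_neighborFinset, mem_insert, mem_singleton]
      grind [adj_comm, Adj.ne]
    · simp only [mem_union, mem_sdiff, mem_inter, mem_neighborFinset]
      rintro (hC | hD)
      exacts [hur hC.1.2.symm, hus hD.1.1.symm]
  · intro x
    simp only [mem_inter, mem_sdiff]
    tauto

theorem stmt_18 {V : Type*} [Fintype V] (G : SimpleGraph V) (p q r s u : V)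
    (h : A4 G p q r s) (hu : u ∉ ({p, q, r, s} : Set V))
    (hup : G.Adj u p) (huq : G.Adj u q) (hur : ¬ G.Adj u r) (hus : ¬ G.Adj u s)
    (hiso : Nonempty (G ≃g twoSwitch G p q r s)) :
    ∃ v : V, v ∉ ({p, q, r, s} : Set V) ∧
      ((G.Adj v q ∧ G.Adj v r ∧ ¬ G.Adj v p ∧ ¬ G.Adj v s) ∨
       (G.Adj v p ∧ G.Adj v s ∧ ¬ G.Adj v q ∧ ¬ G.Adj v r)) :=
  stmt_18_general G p q r s u h hup huq hur hus hiso
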